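/- Let S be a pseudogroup (complete infinitely distributive inverse monoid). A filter A in S is completely prime if and only if (A⁻¹A)^↑ is completely prime. -/
import Mathlib


class InvSemigroup (S : Type*) extends Mul S, Inv S where
  mul_assoc : ∀ a b c : S, a * b * c = a * (b * c)
  mul_inv_mul : ∀ a : S, a * a⁻¹ * a = a
  inv_mul_inv : ∀ a : S, a⁻¹ * a * a⁻¹ = a⁻¹
  idem_comm : ∀ e f : S, e * e = e → f * f = f → e * f = f * e

class InvMonoid (S : Type*) extends InvSemigroup S, One S where
  one_mul : ∀ a : S, 1 * a = a
  mul_one : ∀ a : S, a * 1 = a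

/-- The natural partial order on an inverse semigroup: `a ≤ b` iff `a = b * (a⁻¹ * a)`. -/
def nle {S : Type*} [InvSemigroup S] (a b : S) : Prop := a = b * (a⁻¹ * a)

def IsIdem {S : Type*} [Mul S] (e : S) : Prop := e * e = e

/-- Two elements are compatible if `a⁻¹ * b` and `a * b⁻¹` are idempotents. -/
def Compat {S : Type*} [InvSemigroup S] (a b : S) : Prop :=
  IsIdem (a⁻¹ * b) ∧ IsIdem (a * b⁻¹)

def PairwiseCompat {S : Type*} [InvSemigroup S] (X : Set S) : Prop :=
  ∀ a ∈ X, ∀ b ∈ X, Compat a b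

/-- `s` is the join (least upper bound) of `X` with respect to the natural partial order. -/
def IsJoin {S : Type*} [InvSemigroup S] (X : Set S) (s : S) : Prop :=
  (∀ a ∈ X, nle a s) ∧ ∀ u : S, (∀ a ∈ X, nle a u) → nle s u

/-- A pseudogroup: a complete infinitely distributive inverse monoid. Every
compatible subset has a join and multiplication distributes over such joins. -/
class Pseudogroup (S : Type*) extends InvMonoid S where
  join_exists : ∀ X : Set S, PairwiseCompat X → ∃ s : S, IsJoin X s
  mul_join_left : ∀ (X : Set S) (s c : S), IsJoin X s → IsJoin ((fun x => c * x) '' X) (c * s)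
  mul_join_right : ∀ (X : Set S) (s c : S), IsJoin X s → IsJoin ((fun x => x * c) '' X) (s * c)

/-- Filters: nonempty, upward closed, downward directed subsets. -/
def IsPFilter {S : Type*} [InvSemigroup S] (F : Set S) : Prop :=
  F.Nonempty ∧ (∀ a ∈ F, ∀ b : S, nle a b → b ∈ F) ∧
    (∀ a ∈ F, ∀ b ∈ F, ∃ c ∈ F, nle c a ∧ nle c b)

/-- A completely prime filter: whenever a join of a compatible family belongs to the
filter, so does some member of the family. -/
def CompletelyPrime {S : Type*} [InvSemigroup S] (F : Set S) : Prop :=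
  IsPFilter F ∧ ∀ (X : Set S) (s : S), PairwiseCompat X → IsJoin X s → s ∈ F →
    ∃ x ∈ X, x ∈ F

def setInv {S : Type*} [Inv S] (A : Set S) : Set S := {x | ∃ a ∈ A, x = a⁻¹}

def setMul {S : Type*} [Mul S] (A B : Set S) : Set S :=
  {x | ∃ a ∈ A, ∃ b ∈ B, x = a * b}

def upSet {S : Type*} [InvSemigroup S] (A : Set S) : Set S := {x | ∃ a ∈ A, nle a x}


section Aux
variable {S : Type*} [InvSemigroup S]

instance (priority := low) invSemigroupToSemigroup : Semigroup S :=
  { mul_assoc := InvSemigroup.mul_assoc }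

lemma mim (a : S) : a * a⁻¹ * a = a := InvSemigroup.mul_inv_mul a
lemma imi (a : S) : a⁻¹ * a * a⁻¹ = a⁻¹ := InvSemigroup.inv_mul_inv a
lemma icomm {e f : S} (he : IsIdem e) (hf : IsIdem f) : e * f = f * e :=
  InvSemigroup.idem_comm e f he hf

lemma idem_ia (a : S) : IsIdem (a⁻¹ * a) := by
  show a⁻¹ * a * (a⁻¹ * a) = a⁻¹ * a
  rw [← mul_assoc, imi]

lemma idem_ai (a : S) : IsIdem (a * a⁻¹) := by
  show a * a⁻¹ * (a * a⁻¹) = a * a⁻¹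
  rw [← mul_assoc, mim]

lemma idem_mul {e f : S} (he : IsIdem e) (hf : IsIdem f) : IsIdem (e * f) := by
  show e * f * (e * f) = e * f
  calc e * f * (e * f) = e * (f * e) * f := by simp [mul_assoc]
    _ = e * (e * f) * f := by rw [icomm hf he]
    _ = (e * e) * (f * f) := by simp [mul_assoc]
    _ = e * f := by rw [show e*e = e from he, show f*f = f from hf]

lemma pg_inv_unique {b x y : S} (h1 : b * x * b = b) (h2 : x * b * x = x)
    (h3 : b * y * b = b) (h4 : y * b * y = y) : x = y := by
  have ibx : IsIdem (b * x) := by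
    show b * x * (b * x) = b * x
    rw [← mul_assoc, h1]
  have iby : IsIdem (b * y) := by
    show b * y * (b * y) = b * y
    rw [← mul_assoc, h3]
  have ixb : IsIdem (x * b) := by
    show x * b * (x * b) = x * b
    rw [← mul_assoc, h2]
  have iyb : IsIdem (y * b) := by
    show y * b * (y * b) = y * b
    rw [← mul_assoc, h4]
  have ex : x = x * (b * y) := by
    calc x = x * b * x := h2.symm
      _ = x * (b * y * b) * x := by rw [h3]
      _ = x * ((b * y) * (b * x)) := by simp [mul_assoc]
      _ = x * ((b * x) * (b * y)) := by rw [icomm iby ibx]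
      _ = (x * b * x) * (b * y) := by simp [mul_assoc]
      _ = x * (b * y) := by rw [h2]
  have ey : y = x * (b * y) := by
    calc y = y * b * y := h4.symm
      _ = y * (b * x * b) * y := by rw [h1]
      _ = ((y * b) * (x * b)) * y := by simp [mul_assoc]
      _ = ((x * b) * (y * b)) * y := by rw [icomm iyb ixb]
      _ = (x * b) * (y * b * y) := by simp [mul_assoc]
      _ = (x * b) * y := by rw [h4]
      _ = x * (b * y) := by rw [mul_assoc]
  exact ex.trans ey.symm

lemma pg_inv_inv (a : S) : a⁻¹⁻¹ = a :=
  pg_inv_unique (mim a⁻¹) (imi a⁻¹) (imi a) (mim a)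

lemma idem_inv {e : S} (he : IsIdem e) : e⁻¹ = e := by
  refine pg_inv_unique (mim e) (imi e) ?_ ?_ <;>
    rw [show e*e = e from he] <;> exact he

lemma pg_mul_inv_rev (a b : S) : (a * b)⁻¹ = b⁻¹ * a⁻¹ := by
  refine pg_inv_unique (mim (a*b)) (imi (a*b)) ?_ ?_
  · calc a * b * (b⁻¹ * a⁻¹) * (a * b)
        = a * ((b * b⁻¹) * (a⁻¹ * a)) * b := by simp [mul_assoc]
      _ = a * ((a⁻¹ * a) * (b * b⁻¹)) * b := by rw [icomm (idem_ai b) (idem_ia a)]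
      _ = (a * a⁻¹ * a) * (b * b⁻¹ * b) := by simp [mul_assoc]
      _ = a * b := by rw [mim, mim]
  · calc b⁻¹ * a⁻¹ * (a * b) * (b⁻¹ * a⁻¹)
        = b⁻¹ * ((a⁻¹ * a) * (b * b⁻¹)) * a⁻¹ := by simp [mul_assoc]
      _ = b⁻¹ * ((b * b⁻¹) * (a⁻¹ * a)) * a⁻¹ := by rw [icomm (idem_ia a) (idem_ai b)]
      _ = (b⁻¹ * b * b⁻¹) * (a⁻¹ * a * a⁻¹) := by simp [mul_assoc]
      _ = b⁻¹ * a⁻¹ := by rw [imi, imi]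

lemma nle_of_idem_right {a b e : S} (he : IsIdem e) (h : a = b * e) : nle a b := by
  show a = b * (a⁻¹ * a)
  rw [h]
  refine Eq.symm ?_
  calc b * ((b * e)⁻¹ * (b * e))
      = b * ((e * b⁻¹) * (b * e)) := by rw [pg_mul_inv_rev, idem_inv he]
    _ = b * (e * (b⁻¹ * b)) * e := by simp [mul_assoc]
    _ = b * ((b⁻¹ * b) * e) * e := by rw [icomm he (idem_ia b)]
    _ = (b * b⁻¹ * b) * (e * e) := by simp [mul_assoc]
    _ = b * e := by rw [mim, show e*e = e from he]

lemma nle_of_idem_left {a b e : S} (he : IsIdem e) (h : a = e * b) : nle a b := by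
  show a = b * (a⁻¹ * a)
  rw [h]
  refine Eq.symm ?_
  calc b * ((e * b)⁻¹ * (e * b))
      = b * ((b⁻¹ * e) * (e * b)) := by rw [pg_mul_inv_rev, idem_inv he]
    _ = (b * b⁻¹) * (e * e) * b := by simp [mul_assoc]
    _ = (b * b⁻¹) * e * b := by rw [show e*e = e from he]
    _ = e * (b * b⁻¹) * b := by rw [icomm (idem_ai b) he]
    _ = e * (b * b⁻¹ * b) := by simp [mul_assoc]
    _ = e * b := by rw [mim]

lemma nle_exists_right {a b : S} (h : nle a b) : ∃ e, IsIdem e ∧ a = b * e :=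
  ⟨a⁻¹ * a, idem_ia a, h⟩

lemma absorb_aux {b e : S} (he : IsIdem e) : (b * e) * (b * e)⁻¹ * b = b * e := by
  calc (b * e) * (b * e)⁻¹ * b
      = (b * e) * (e * b⁻¹) * b := by rw [pg_mul_inv_rev, idem_inv he]
    _ = b * ((e * e) * (b⁻¹ * b)) := by simp [mul_assoc]
    _ = b * (e * (b⁻¹ * b)) := by rw [show e*e = e from he]
    _ = b * ((b⁻¹ * b) * e) := by rw [icomm he (idem_ia b)]
    _ = (b * b⁻¹ * b) * e := by simp [mul_assoc]
    _ = b * e := by rw [mim]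

lemma nle_absorb {a b : S} (h : nle a b) : a * a⁻¹ * b = a := by
  have hd : a = b * (a⁻¹ * a) := h
  have := absorb_aux (b := b) (idem_ia a)
  rw [← hd] at this
  exact this

lemma nle_exists_left {a b : S} (h : nle a b) : ∃ e, IsIdem e ∧ a = e * b :=
  ⟨a * a⁻¹, idem_ai a, (nle_absorb h).symm⟩

lemma nle_refl (a : S) : nle a a := by
  show a = a * (a⁻¹ * a)
  rw [← mul_assoc, mim]

lemma nle_trans {a b c : S} (h1 : nle a b) (h2 : nle b c) : nle a c := by
  obtain ⟨e, he, hae⟩ := nle_exists_right h1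
  obtain ⟨f, hf, hbf⟩ := nle_exists_right h2
  exact nle_of_idem_right (idem_mul hf he) (by rw [hae, hbf, mul_assoc])

lemma nle_mul_left (c : S) {a b : S} (h : nle a b) : nle (c * a) (c * b) := by
  obtain ⟨e, he, hae⟩ := nle_exists_right h
  exact nle_of_idem_right he (by rw [hae, mul_assoc])

lemma nle_mul_right (c : S) {a b : S} (h : nle a b) : nle (a * c) (b * c) := by
  obtain ⟨e, he, hae⟩ := nle_exists_left h
  exact nle_of_idem_left he (by rw [hae, mul_assoc])

lemma nle_inv {a b : S} (h : nle a b) : nle a⁻¹ b⁻¹ := by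
  obtain ⟨e, he, hae⟩ := nle_exists_right h
  exact nle_of_idem_left he (by rw [hae, pg_mul_inv_rev, idem_inv he])

lemma nle_mul {a b c d : S} (h1 : nle a b) (h2 : nle c d) : nle (a * c) (b * d) :=
  nle_trans (nle_mul_right c h1) (nle_mul_left b h2)

lemma nle_idem_left {e : S} (he : IsIdem e) (x : S) : nle (e * x) x :=
  nle_of_idem_left he rfl

lemma nle_dom {c a : S} (h : nle c a) : a * (a⁻¹ * c) = c := by
  have hd : c = a * (c⁻¹ * c) := h
  calc a * (a⁻¹ * c) = a * (a⁻¹ * (a * (c⁻¹ * c))) := by conv_lhs => rw [hd]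
    _ = (a * a⁻¹ * a) * (c⁻¹ * c) := by simp [mul_assoc]
    _ = a * (c⁻¹ * c) := by rw [mim]
    _ = c := hd.symm

lemma idem_conj {e : S} (he : IsIdem e) (a : S) : IsIdem (a⁻¹ * e * a) := by
  show (a⁻¹ * e * a) * (a⁻¹ * e * a) = a⁻¹ * e * a
  calc (a⁻¹ * e * a) * (a⁻¹ * e * a)
      = a⁻¹ * (e * (a * a⁻¹)) * (e * a) := by simp [mul_assoc]
    _ = a⁻¹ * ((a * a⁻¹) * e) * (e * a) := by rw [icomm he (idem_ai a)]
    _ = (a⁻¹ * a * a⁻¹) * ((e * e) * a) := by simp [mul_assoc]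
    _ = a⁻¹ * (e * a) := by rw [imi, show e*e = e from he]
    _ = a⁻¹ * e * a := by rw [mul_assoc]

lemma idem_conj' {e : S} (he : IsIdem e) (a : S) : IsIdem (a * e * a⁻¹) := by
  have := idem_conj he a⁻¹
  rwa [pg_inv_inv] at this

lemma idem_sandwich {x y e : S} (he : IsIdem e) (h : IsIdem (x⁻¹ * y)) :
    IsIdem (x⁻¹ * e * y) := by
  have key : x⁻¹ * e * y = (x⁻¹ * e * x) * (x⁻¹ * y) := by
    refine Eq.symm ?_
    calc (x⁻¹ * e * x) * (x⁻¹ * y)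
        = x⁻¹ * (e * (x * x⁻¹)) * y := by simp [mul_assoc]
      _ = x⁻¹ * ((x * x⁻¹) * e) * y := by rw [icomm he (idem_ai x)]
      _ = (x⁻¹ * x * x⁻¹) * (e * y) := by simp [mul_assoc]
      _ = x⁻¹ * (e * y) := by rw [imi]
      _ = x⁻¹ * e * y := by rw [mul_assoc]
  rw [key]
  exact idem_mul (idem_conj he x) h

lemma compat_mul_left (c : S) {x y : S} (h : Compat x y) : Compat (c * x) (c * y) := by
  constructor
  · show IsIdem ((c * x)⁻¹ * (c * y))
    have heq : (c * x)⁻¹ * (c * y) = x⁻¹ * (c⁻¹ * c) * y := by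
      rw [pg_mul_inv_rev]; simp [mul_assoc]
    rw [heq]
    exact idem_sandwich (idem_ia c) h.1
  · show IsIdem ((c * x) * (c * y)⁻¹)
    have heq : (c * x) * (c * y)⁻¹ = c * (x * y⁻¹) * c⁻¹ := by
      rw [pg_mul_inv_rev]; simp [mul_assoc]
    rw [heq]
    exact idem_conj' h.2 c

lemma pc_image (c : S) {X : Set S} (h : PairwiseCompat X) :
    PairwiseCompat ((fun x => c * x) '' X) := by
  rintro _ ⟨x, hx, rfl⟩ _ ⟨y, hy, rfl⟩
  exact compat_mul_left c (h x hx y hy)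

lemma mem_D {A : Set S} {x : S} :
    x ∈ upSet (setMul (setInv A) A) ↔ ∃ a ∈ A, ∃ b ∈ A, nle (a⁻¹ * b) x := by
  constructor
  · rintro ⟨z, ⟨ai, ⟨a, ha, rfl⟩, b, hb, rfl⟩, hz⟩
    exact ⟨a, ha, b, hb, hz⟩
  · rintro ⟨a, ha, b, hb, h⟩
    exact ⟨a⁻¹ * b, ⟨a⁻¹, ⟨a, ha, rfl⟩, b, hb, rfl⟩, h⟩

lemma D_filter {A : Set S} (hA : IsPFilter A) :
    IsPFilter (upSet (setMul (setInv A) A)) := by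
  obtain ⟨⟨a0, ha0⟩, hup, hdir⟩ := hA
  refine ⟨⟨a0⁻¹ * a0, mem_D.2 ⟨a0, ha0, a0, ha0, nle_refl _⟩⟩, ?_, ?_⟩
  · rintro x hx y hxy
    obtain ⟨a, ha, b, hb, h⟩ := mem_D.1 hx
    exact mem_D.2 ⟨a, ha, b, hb, nle_trans h hxy⟩
  · rintro x hx y hy
    obtain ⟨a, ha, b, hb, hab⟩ := mem_D.1 hx
    obtain ⟨c, hc, d, hd, hcd⟩ := mem_D.1 hy
    obtain ⟨p, hp, hpa, hpb⟩ := hdir a ha b hb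
    obtain ⟨q, hq, hqc, hqd⟩ := hdir c hc d hd
    obtain ⟨r, hr, hrp, hrq⟩ := hdir p hp q hq
    refine ⟨r⁻¹ * r, mem_D.2 ⟨r, hr, r, hr, nle_refl _⟩, ?_, ?_⟩
    · exact nle_trans (nle_mul (nle_inv (nle_trans hrp hpa)) (nle_trans hrp hpb)) hab
    · exact nle_trans (nle_mul (nle_inv (nle_trans hrq hqc)) (nle_trans hrq hqd)) hcd

lemma key1 {A : Set S} (hA : IsPFilter A) {a b : S} (ha : a ∈ A) (hb : b ∈ A) :
    a * (a⁻¹ * b) ∈ A := by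
  obtain ⟨c, hc, hca, hcb⟩ := hA.2.2 a ha b hb
  have h1 : a * (a⁻¹ * c) = c := nle_dom hca
  have h2 : nle c (a * (a⁻¹ * b)) := by
    rw [← h1]
    exact nle_mul_left a (nle_mul_left a⁻¹ hcb)
  exact hA.2.1 c hc _ h2

end Aux

/-- In a pseudogroup, a filter `A` is completely prime iff `d(A) = (A⁻¹A)^↑` is
completely prime. -/
theorem stmt7 {S : Type*} [Pseudogroup S] (A : Set S) (hA : IsPFilter A) :
    CompletelyPrime A ↔ CompletelyPrime (upSet (setMul (setInv A) A)) := by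
  have hD : IsPFilter (upSet (setMul (setInv A) A)) := D_filter hA
  constructor
  · rintro ⟨-, hprime⟩
    refine ⟨hD, ?_⟩
    rintro X s hX hJ hs
    obtain ⟨a, ha, b, hb, habs⟩ := mem_D.1 hs
    have hmem : a * s ∈ A :=
      hA.2.1 _ (key1 hA ha hb) _ (nle_mul_left a habs)
    obtain ⟨y, hyY, hyA⟩ := hprime ((fun x => a * x) '' X) (a * s)
      (pc_image a hX) (Pseudogroup.mul_join_left X s a hJ) hmem
    obtain ⟨x, hxX, rfl⟩ := hyY
    refine ⟨x, hxX, mem_D.2 ⟨a, ha, a * x, hyA, ?_⟩⟩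
    have heq : a⁻¹ * (a * x) = (a⁻¹ * a) * x := by rw [mul_assoc]
    rw [heq]
    exact nle_idem_left (idem_ia a) x
  · rintro ⟨-, hprime⟩
    refine ⟨hA, ?_⟩
    rintro X s hX hJ hs
    have hss : s⁻¹ * s ∈ upSet (setMul (setInv A) A) :=
      mem_D.2 ⟨s, hs, s, hs, nle_refl _⟩
    obtain ⟨y, hyY, hyD⟩ := hprime ((fun x => s⁻¹ * x) '' X) (s⁻¹ * s)
      (pc_image s⁻¹ hX) (Pseudogroup.mul_join_left X s s⁻¹ hJ) hss
    obtain ⟨x, hxX, rfl⟩ := hyY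
    obtain ⟨a, ha, b, hb, hab⟩ := mem_D.1 hyD
    obtain ⟨c, hc, hca, hcb⟩ := hA.2.2 a ha b hb
    obtain ⟨d, hd, hdc, hds⟩ := hA.2.2 c hc s hs
    have h1 : nle (d⁻¹ * d) (s⁻¹ * x) :=
      nle_trans (nle_mul (nle_inv (nle_trans hdc hca)) (nle_trans hdc hcb)) hab
    have h2 : nle d x := by
      have hd_eq : d = s * (d⁻¹ * d) := hds
      have h4 : nle (s * (d⁻¹ * d)) (s * (s⁻¹ * x)) := nle_mul_left s h1
      rw [← hd_eq] at h4
      have h3 : nle (s * (s⁻¹ * x)) x := by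
        have heq : s * (s⁻¹ * x) = (s * s⁻¹) * x := by rw [mul_assoc]
        rw [heq]
        exact nle_idem_left (idem_ai s) x
      exact nle_trans h4 h3
    exact ⟨x, hxX, hA.2.1 d hd x h2⟩
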